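/- arXiv:2106.11861 — 9 statements merged into one kernel-verified Lean document; each statement's English description precedes it below -/
import Mathlib

section
/- Let n be a natural number, let μ be a probability measure on ℝ such that every absolute moment ∫ |x|^k dμ(x) (k ∈ ℕ) is finite, with mean zero (∫ x dμ(x) = 0) and unit variance (∫ x² dμ(x) = 1). Then for every n×n real matrix A, the permanent of A equals the integral, with respect to the n-fold product measure μⁿ on ℝⁿ, of the function x ↦ ∏_{i=1}^n ( x_i · ∑_{j=1}^n A_{i,j} x_j ). Equivalently, perm(A) = E[ ∏_i X_i (∑_j A_{i,j} X_j) ] where X_1,…,X_n are i.i.d. random variables with law μ. -/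
open MeasureTheory

lemma aux_int {α : Type} [MeasurableSpace α] {ι : Type} [Fintype ι] (μ : Measure α)
    [SigmaFinite μ] (f : ι → α → ℝ) :
    ∫ x : ι → α, ∏ i, f i (x i) ∂(Measure.pi fun _ => μ) = ∏ i, ∫ x, f i x ∂μ := by
  letI : MeasureSpace α := ⟨μ⟩
  exact MeasureTheory.integral_fintype_prod_eq_prod f

lemma aux_intg {α : Type} [MeasurableSpace α] {ι : Type} [Fintype ι] (μ : Measure α)
    [SigmaFinite μ] {f : ι → α → ℝ} (hf : ∀ i, Integrable (f i) μ) :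
    Integrable (fun x : ι → α => ∏ i, f i (x i)) (Measure.pi fun _ => μ) := by
  letI : MeasureSpace α := ⟨μ⟩
  exact Integrable.fintype_prod hf

/-- The permanent of a matrix as the expectation of `∏ i, X i * ∑ j, A i j * X j`
for i.i.d. random variables `X i ~ μ`, where `μ` has all absolute moments finite,
zero mean and unit variance. -/
theorem permanent_eq_integral_prod
    (n : ℕ) (μ : Measure ℝ) [IsProbabilityMeasure μ]
    (hmom : ∀ k : ℕ, Integrable (fun x : ℝ => |x| ^ k) μ)
    (hmean : ∫ x, x ∂μ = 0) (hvar : ∫ x, x ^ 2 ∂μ = 1)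
    (A : Matrix (Fin n) (Fin n) ℝ) :
    A.permanent =
      ∫ x : Fin n → ℝ, (∏ i, x i * ∑ j, A i j * x j) ∂(Measure.pi fun _ => μ) := by
  classical
  have hint : ∀ d : ℕ, Integrable (fun x : ℝ => x ^ d) μ := by
    intro d
    refine (hmom d).mono' ((measurable_id.pow_const d).aestronglyMeasurable) ?_
    filter_upwards with x
    simp [abs_pow]
  -- multiplicity of k as a value of p, plus one
  set c : (Fin n → Fin n) → Fin n → ℕ :=
    fun p k => (Finset.univ.filter fun i => p i = k).card with hc
  -- pointwise expansion of the integrand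
  have hexp : ∀ x : Fin n → ℝ,
      (∏ i, x i * ∑ j, A i j * x j)
        = ∑ p ∈ Fintype.piFinset (fun _ : Fin n => (Finset.univ : Finset (Fin n))),
            (∏ i, A i (p i)) * ∏ k, x k ^ (c p k + 1) := by
    intro x
    have h1 : (∏ i, x i * ∑ j, A i j * x j) = ∏ i, ∑ j, A i j * (x i * x j) := by
      refine Finset.prod_congr rfl fun i _ => ?_
      rw [Finset.mul_sum]
      exact Finset.sum_congr rfl fun j _ => by ring
    rw [h1, Finset.prod_univ_sum]
    refine Finset.sum_congr rfl fun p _ => ?_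
    rw [Finset.prod_mul_distrib]
    congr 1
    -- ∏ i, x i * x (p i) = ∏ k, x k ^ (c p k + 1)
    have h2 : (∏ i, x (p i)) = ∏ k, x k ^ (c p k) := by
      rw [Finset.prod_comp x p]
      refine Finset.prod_subset (f := fun b => x b ^ (Finset.univ.filter fun i => p i = b).card)
        (Finset.subset_univ _) ?_
      intro k _ hk
      have : (Finset.univ.filter fun i => p i = k).card = 0 := by
        rw [Finset.card_eq_zero, Finset.filter_eq_empty_iff]
        intro i _ h
        exact hk (Finset.mem_image.mpr ⟨i, Finset.mem_univ _, h⟩)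
      simp [hc, this]
    calc (∏ i, x i * x (p i)) = (∏ i, x i) * ∏ i, x (p i) := Finset.prod_mul_distrib
    _ = (∏ k, x k) * ∏ k, x k ^ (c p k) := by rw [h2]
    _ = ∏ k, x k ^ (c p k + 1) := by
        rw [← Finset.prod_mul_distrib]
        exact Finset.prod_congr rfl fun k _ => by rw [pow_succ, mul_comm]
  simp_rw [hexp]
  rw [integral_finset_sum _ (fun p _ =>
    ((aux_intg μ (f := fun k x => x ^ (c p k + 1)) fun k => hint _).const_mul _))]
  have hterm : ∀ p : Fin n → Fin n,
      (∫ x : Fin n → ℝ, (∏ i, A i (p i)) * ∏ k, x k ^ (c p k + 1)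
          ∂(Measure.pi fun _ => μ))
        = (∏ i, A i (p i)) * if Function.Bijective p then 1 else 0 := by
    intro p
    rw [integral_const_mul _ _, aux_int μ (fun k x => x ^ (c p k + 1))]
    congr 1
    by_cases hp : Function.Bijective p
    · rw [if_pos hp]
      refine Finset.prod_eq_one fun k _ => ?_
      have : c p k = 1 := by
        show (Finset.univ.filter fun i => p i = k).card = 1
        rw [show (Finset.univ.filter fun i => p i = k) = {(Equiv.ofBijective p hp).symm k}
          from ?_]
        · simp
        · ext i
          simp only [Finset.mem_filter, Finset.mem_univ, true_and, Finset.mem_singleton]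
          constructor
          · intro h
            exact hp.injective (h.trans ((Equiv.ofBijective p hp).apply_symm_apply k).symm)
          · intro h; subst h
            exact (Equiv.ofBijective p hp).apply_symm_apply k
      rw [this]
      simpa using hvar
    · rw [if_neg hp]
      have hps : ¬ Function.Surjective p := by
        intro hs
        exact hp ⟨Finite.injective_iff_surjective.mpr hs, hs⟩
      obtain ⟨k, hk⟩ : ∃ k, ∀ i, p i ≠ k := by
        by_contra h
        push_neg at h
        exact hps fun k => h k
      refine Finset.prod_eq_zero (Finset.mem_univ k) ?_
      have : c p k = 0 := by
        show (Finset.univ.filter fun i => p i = k).card = 0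
        rw [Finset.card_eq_zero, Finset.filter_eq_empty_iff]
        intro i _
        exact hk i
      rw [this]
      simpa using hmean
  simp_rw [hterm]
  simp_rw [mul_ite, mul_one, mul_zero]
  rw [Finset.sum_ite, Finset.sum_const_zero, add_zero]
  have h3 : A.permanent = ∑ σ : Equiv.Perm (Fin n), ∏ i, A i (σ i) := by
    rw [Matrix.permanent,
      ← Equiv.sum_comp (Equiv.inv (Equiv.Perm (Fin n))) (fun σ => ∏ i, A i (σ i))]
    refine Finset.sum_congr rfl fun σ _ => ?_
    calc ∏ i, A (σ i) i = ∏ i, A (σ i) (σ⁻¹ (σ i)) := by simp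
    _ = ∏ i, A i (σ⁻¹ i) := Equiv.prod_comp σ (fun i => A i (σ⁻¹ i))
    _ = ∏ i, A i ((Equiv.inv (Equiv.Perm (Fin n)) σ) i) := rfl
  rw [h3]
  refine Finset.sum_bij (fun (σ : Equiv.Perm (Fin n)) _ => ⇑σ) ?_ ?_ ?_ ?_
  · intro σ _
    refine Finset.mem_filter.mpr ⟨?_, σ.bijective⟩
    simp
  · intro σ _ τ _ h
    exact Equiv.ext fun i => congrFun h i
  · intro p hp
    exact ⟨Equiv.ofBijective p (Finset.mem_filter.mp hp).2, Finset.mem_univ _, rfl⟩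
  · intro σ _
    rfl
end

section
/- Let n be a natural number and let μ be a probability measure on ℝ such that every absolute moment ∫ |x|^k dμ(x) (k ∈ ℕ) is finite, with mean zero (∫ x dμ(x) = 0) and unit variance (∫ x² dμ(x) = 1). Then for every map m : {1,…,n} → {1,…,n}, the integral over ℝⁿ with respect to the n-fold product measure μⁿ of the function x ↦ ∏_{i=1}^n x_i · x_{m(i)} equals 1 if m is a bijection (i.e., a permutation of {1,…,n}) and equals 0 otherwise. -/
open MeasureTheory

/-- The "permutation tensor": for `μ` a probability measure with all absolute moments
finite, zero mean and unit variance, the integral of `∏ i, x i * x (m i)` over the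
product measure equals 1 if `m` is a permutation and 0 otherwise. -/
theorem integral_prod_eq_indicator_bijective
    (n : ℕ) (μ : Measure ℝ) [IsProbabilityMeasure μ]
    (hmom : ∀ k : ℕ, Integrable (fun x : ℝ => |x| ^ k) μ)
    (hmean : ∫ x, x ∂μ = 0) (hvar : ∫ x, x ^ 2 ∂μ = 1)
    (m : Fin n → Fin n) :
    (∫ x : Fin n → ℝ, (∏ i, x i * x (m i)) ∂(Measure.pi fun _ => μ)) =
      if Function.Bijective m then 1 else 0 := by
  classical
  set c : Fin n → ℕ := fun j => (Finset.univ.filter (fun i => m i = j)).card with hc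
  have hfact : ∀ x : Fin n → ℝ,
      (∏ i, x i * x (m i)) = ∏ j, (x j) ^ (1 + c j) := by
    intro x
    rw [Finset.prod_mul_distrib]
    have h1 : (∏ i, x (m i)) = ∏ j, (x j) ^ (c j) := by
      rw [← Finset.prod_fiberwise' Finset.univ m (fun j => x j)]
      refine Finset.prod_congr rfl fun j _ => ?_
      rw [Finset.prod_const]
    rw [h1, ← Finset.prod_mul_distrib]
    refine Finset.prod_congr rfl fun j _ => ?_
    rw [pow_add, pow_one]
  simp_rw [hfact]
  letI : MeasureSpace ℝ := ⟨μ⟩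
  have hσ : SigmaFinite (volume : Measure ℝ) := by
    show SigmaFinite μ; infer_instance
  have key := integral_fintype_prod_eq_prod (𝕜 := ℝ) (ι := Fin n) (E := fun _ => ℝ)
      (fun j x => x ^ (1 + c j)) (μ := fun _ => μ)
  have key' : (∫ x : Fin n → ℝ, ∏ j, (x j) ^ (1 + c j) ∂(Measure.pi fun _ => μ))
      = ∏ j, ∫ x : ℝ, x ^ (1 + c j) ∂μ := key
  rw [key']
  by_cases hb : Function.Bijective m
  · simp only [hb, if_true]
    have hcard : ∀ j, c j = 1 := by
      intro j
      rw [hc]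
      rw [Finset.card_eq_one]
      refine ⟨(Equiv.ofBijective m hb).symm j, ?_⟩
      ext i
      simp only [Finset.mem_filter, Finset.mem_univ, true_and, Finset.mem_singleton]
      constructor
      · intro h; exact (Equiv.ofBijective m hb).injective (by simpa using h)
      · rintro rfl; exact (Equiv.ofBijective m hb).apply_symm_apply j
    refine Finset.prod_eq_one fun j _ => ?_
    rw [hcard j]
    norm_num [hvar]
  · simp only [hb, if_false]
    have : ¬ Function.Surjective m := by
      intro hs
      exact hb (Finite.surjective_iff_bijective.mp hs)
    simp only [Function.Surjective, not_forall, not_exists] at this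
    obtain ⟨j, hj⟩ := this
    refine Finset.prod_eq_zero (Finset.mem_univ j) ?_
    have : c j = 0 := by
      rw [hc, Finset.card_eq_zero]
      ext i; simp [hj i]
    rw [this]
    simpa using hmean
end

section
/- Let n be a natural number and let m : {1,…,n} → {1,…,n} be any map. Then (1/2ⁿ) · ∑_{s ∈ {−1,+1}ⁿ} ∏_{i=1}^n s_i · s_{m(i)} equals 1 if m is a bijection (i.e., a permutation of {1,…,n}) and equals 0 otherwise. -/
/-- The Bernoulli (±1) realization of the permutation tensor:
`(1/2^n) ∑_{s ∈ {−1,+1}ⁿ} ∏ i, s i * s (m i)` equals 1 if `m` is a permutation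
of `{1,…,n}` and 0 otherwise. -/
theorem signSum_prod_eq_indicator_bijective
    (n : ℕ) (m : Fin n → Fin n) :
    (1 / 2 ^ n : ℝ) *
        ∑ s ∈ Fintype.piFinset (fun _ : Fin n => ({-1, 1} : Finset ℝ)),
          ∏ i, s i * s (m i) =
      if Function.Bijective m then 1 else 0 := by
  by_cases hb : Function.Bijective m
  · rw [if_pos hb]
    have hsum : ∑ s ∈ Fintype.piFinset (fun _ : Fin n => ({-1, 1} : Finset ℝ)),
        ∏ i, s i * s (m i) = 2 ^ n := by
      have hone : ∀ s ∈ Fintype.piFinset (fun _ : Fin n => ({-1, 1} : Finset ℝ)),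
          ∏ i, s i * s (m i) = 1 := by
        intro s hs
        have h2 : ∀ i, s i * s i = 1 := by
          intro i
          have := Fintype.mem_piFinset.mp hs i
          rcases Finset.mem_insert.mp this with h | h
          · rw [h]; ring
          · rw [Finset.mem_singleton.mp h]; ring
        calc ∏ i, s i * s (m i) = (∏ i, s i) * ∏ i, s (m i) := Finset.prod_mul_distrib
          _ = (∏ i, s i) * ∏ i, s i := by
              rw [Fintype.prod_bijective m hb _ _ (fun i => rfl)]
          _ = ∏ i, s i * s i := Finset.prod_mul_distrib.symm
          _ = 1 := by simp [h2]
      rw [Finset.sum_congr rfl hone, Finset.sum_const]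
      norm_num
    rw [hsum]
    field_simp
  · rw [if_neg hb]
    have hsurj : ¬ Function.Surjective m := fun h =>
      hb (Finite.surjective_iff_bijective.mp h)
    obtain ⟨j, hj⟩ : ∃ j, ∀ i, m i ≠ j := by
      simp only [Function.Surjective, not_forall, not_exists] at hsurj
      exact hsurj
    have hsum : ∑ s ∈ Fintype.piFinset (fun _ : Fin n => ({-1, 1} : Finset ℝ)),
        ∏ i, s i * s (m i) = 0 := by
      apply Finset.sum_involution (fun s _ => Function.update s j (-s j))
      · intro s hs
        have hupd : ∀ i, Function.update s j (-s j) (m i) = s (m i) := fun i =>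
          Function.update_of_ne (hj i) _ _
        have hprod : ∏ i, Function.update s j (-s j) i = -∏ i, s i := by
          rw [Finset.prod_update_of_mem (Finset.mem_univ j)]
          rw [← Finset.mul_prod_erase Finset.univ s (Finset.mem_univ j),
            ← Finset.sdiff_singleton_eq_erase]
          ring
        have : ∏ i, Function.update s j (-s j) i * Function.update s j (-s j) (m i)
            = -(∏ i, s i * s (m i)) := by
          rw [Finset.prod_mul_distrib, Finset.prod_mul_distrib, hprod]
          simp only [hupd]
          ring
        rw [this]; ring
      · intro s hs hne
        have hsj : s j ≠ 0 := by
          have := Fintype.mem_piFinset.mp hs j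
          rcases Finset.mem_insert.mp this with h | h
          · rw [h]; norm_num
          · rw [Finset.mem_singleton.mp h]; norm_num
        intro heq
        have := congrFun heq j
        rw [Function.update_self] at this
        exact hsj (by linarith)
      · intro s hs
        simp [Function.update_idem]
      · intro s hs
        simp only [Fintype.mem_piFinset, Finset.mem_insert, Finset.mem_singleton]
        intro i
        by_cases hij : i = j
        · subst hij
          rw [Function.update_self]
          have := Fintype.mem_piFinset.mp hs i
          rcases Finset.mem_insert.mp this with h | h
          · rw [h]; norm_num
          · rw [Finset.mem_singleton.mp h]; norm_num
        · rw [Function.update_of_ne hij]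
          have := Fintype.mem_piFinset.mp hs i
          simpa using this
    rw [hsum]
    ring
end

section
/- Let A be an n×n real matrix. Then perm(A) = (1/2ⁿ) · ∑_{s ∈ {−1,+1}ⁿ} ∏_{i=1}^n ( s_i · ∑_{j=1}^n A_{i,j} s_j ), where the sum ranges over all 2ⁿ vectors s = (s_1,…,s_n) with each s_i ∈ {−1,+1}. That is, the permanent is the expectation of ∏_i s_i (∑_j A_{i,j} s_j) over n i.i.d. uniform ±1 (Rademacher) random variables. -/
open Finset

lemma fiber_card_pos_of_all_odd {n : ℕ} (f : Fin n → Fin n)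
    (h : ∀ k, Odd (#{a ∈ (univ : Finset (Fin n)) | f a = k})) :
    Function.Bijective f := by
  rw [← Finite.surjective_iff_bijective]
  intro k
  have := (h k).pos
  obtain ⟨a, ha⟩ := Finset.card_pos.mp this
  exact ⟨a, (Finset.mem_filter.mp ha).2⟩

lemma prod_eval_comp {n : ℕ} (f : Fin n → Fin n) (s : Fin n → ℝ) :
    ∏ i, s (f i) * s i = ∏ k, s k ^ (#{a ∈ (univ : Finset (Fin n)) | f a = k} + 1) := by
  rw [Finset.prod_mul_distrib]
  have h1 : ∏ i, s (f i) = ∏ k, s k ^ #{a ∈ (univ : Finset (Fin n)) | f a = k} := by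
    rw [Finset.prod_comp]
    apply Finset.prod_subset (Finset.subset_univ _)
    intro k _ hk
    have : #{a ∈ (univ : Finset (Fin n)) | f a = k} = 0 := by
      rw [Finset.card_eq_zero, Finset.filter_eq_empty_iff]
      intro a _
      exact fun h => hk (Finset.mem_image.mpr ⟨a, Finset.mem_univ a, h⟩)
    simp [this]
  rw [h1, ← Finset.prod_mul_distrib]
  exact Finset.prod_congr rfl fun k _ => (pow_succ _ _).symm

lemma key_sum {n : ℕ} (f : Fin n → Fin n) :
    ∑ s ∈ Fintype.piFinset (fun _ : Fin n => ({-1, 1} : Finset ℝ)),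
      ∏ i, s (f i) * s i = if Function.Bijective f then (2 : ℝ) ^ n else 0 := by
  have hrw : ∀ s ∈ Fintype.piFinset (fun _ : Fin n => ({-1, 1} : Finset ℝ)),
      ∏ i, s (f i) * s i
        = ∏ k, s k ^ (#{a ∈ (univ : Finset (Fin n)) | f a = k} + 1) :=
    fun s _ => prod_eval_comp f s
  have hps := Finset.prod_univ_sum (fun _ : Fin n => ({-1, 1} : Finset ℝ))
    (fun k x => x ^ (#{a ∈ (univ : Finset (Fin n)) | f a = k} + 1))
  rw [Finset.sum_congr rfl hrw, ← hps]
  by_cases hb : Function.Bijective f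
  · rw [if_pos hb]
    have hc : ∀ k, #{a ∈ (univ : Finset (Fin n)) | f a = k} = 1 := by
      intro k
      obtain ⟨a, ha⟩ := hb.surjective k
      rw [Finset.card_eq_one]
      refine ⟨a, ?_⟩
      ext b
      simp only [Finset.mem_filter, Finset.mem_univ, true_and, Finset.mem_singleton, ← ha]
      exact ⟨fun h => hb.injective h, fun h => by rw [h]⟩
    have : ∀ k : Fin n, ∑ x ∈ ({-1, 1} : Finset ℝ),
        x ^ (#{a ∈ (univ : Finset (Fin n)) | f a = k} + 1) = 2 := by
      intro k; rw [hc k]; norm_num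
    rw [Finset.prod_congr rfl (fun k _ => this k)]
    simp
  · rw [if_neg hb]
    have : ∃ k, ¬ Odd (#{a ∈ (univ : Finset (Fin n)) | f a = k}) := by
      by_contra h
      push_neg at h
      exact hb (fiber_card_pos_of_all_odd f (by simpa using h))
    obtain ⟨k, hk⟩ := this
    rw [Nat.not_odd_iff_even] at hk
    apply Finset.prod_eq_zero (Finset.mem_univ k)
    have hodd : Odd (#{a ∈ (univ : Finset (Fin n)) | f a = k} + 1) := Even.add_one hk
    rw [Finset.sum_pair (by norm_num : (-1 : ℝ) ≠ 1)]
    rw [hodd.neg_one_pow, one_pow]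
    ring

lemma sum_bijective_eq_sum_perm {n : ℕ} (g : (Fin n → Fin n) → ℝ) :
    ∑ f ∈ (univ : Finset (Fin n → Fin n)).filter (fun f => Function.Bijective f), g f
      = ∑ σ : Equiv.Perm (Fin n), g ⇑σ := by
  apply Finset.sum_bij (fun f hf => Equiv.ofBijective f (Finset.mem_filter.mp hf).2)
  · intro _ _; exact Finset.mem_univ _
  · intro f1 h1 f2 h2 heq
    exact congrArg (fun e : Equiv.Perm (Fin n) => ⇑e) heq
  · intro σ _
    exact ⟨⇑σ, Finset.mem_filter.mpr ⟨Finset.mem_univ _, σ.bijective⟩, Equiv.ext fun x => rfl⟩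
  · intro f hf; rfl

/-- The permanent as the expectation over i.i.d. Rademacher (uniform ±1) variables:
`perm(A) = (1/2ⁿ) ∑_{s ∈ {−1,+1}ⁿ} ∏ i, s i * ∑ j, A i j * s j`. -/
theorem permanent_eq_rademacher_expectation
    {n : ℕ} (A : Matrix (Fin n) (Fin n) ℝ) :
    A.permanent =
      (1 / 2 ^ n : ℝ) *
        ∑ s ∈ Fintype.piFinset (fun _ : Fin n => ({-1, 1} : Finset ℝ)),
          ∏ i, s i * ∑ j, A i j * s j := by
  have step1 : ∀ s : Fin n → ℝ,
      ∏ i, s i * ∑ j, A i j * s j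
        = ∑ f : Fin n → Fin n, ∏ i, A i (f i) * (s (f i) * s i) := by
    intro s
    have := Finset.prod_univ_sum (fun _ : Fin n => (univ : Finset (Fin n)))
      (fun i j => A i j * (s j * s i))
    rw [Fintype.piFinset_univ] at this
    rw [← this]
    apply Finset.prod_congr rfl
    intro i _
    rw [Finset.mul_sum]
    apply Finset.sum_congr rfl
    intro j _
    ring
  simp_rw [step1]
  rw [Finset.sum_comm]
  have step2 : ∀ f : Fin n → Fin n,
      ∑ s ∈ Fintype.piFinset (fun _ : Fin n => ({-1, 1} : Finset ℝ)),
        ∏ i, A i (f i) * (s (f i) * s i)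
      = (∏ i, A i (f i)) * (if Function.Bijective f then (2 : ℝ) ^ n else 0) := by
    intro f
    rw [← key_sum f, Finset.mul_sum]
    apply Finset.sum_congr rfl
    intro s _
    rw [Finset.prod_mul_distrib]
  rw [Finset.sum_congr rfl (fun f _ => step2 f)]
  have step3 : ∑ f : Fin n → Fin n,
      (∏ i, A i (f i)) * (if Function.Bijective f then (2 : ℝ) ^ n else 0)
      = (2 : ℝ) ^ n * ∑ σ : Equiv.Perm (Fin n), ∏ i, A i (σ i) := by
    rw [← Finset.sum_filter_of_ne
      (p := fun f : Fin n → Fin n => Function.Bijective f)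
      (by intro f _ h; by_contra hb; rw [if_neg hb, mul_zero] at h; exact h rfl)]
    have : ∀ f ∈ (univ : Finset (Fin n → Fin n)).filter (fun f => Function.Bijective f),
        (∏ i, A i (f i)) * (if Function.Bijective f then (2 : ℝ) ^ n else 0)
          = (2 : ℝ) ^ n * ∏ i, A i (f i) := by
      intro f hf
      rw [if_pos (Finset.mem_filter.mp hf).2]; ring
    rw [Finset.sum_congr rfl this,
      sum_bijective_eq_sum_perm (fun f => (2 : ℝ) ^ n * ∏ i, A i (f i)),
      ← Finset.mul_sum]
  rw [step3, Matrix.permanent]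
  have hre : ∑ σ : Equiv.Perm (Fin n), ∏ i, A (σ i) i
      = ∑ σ : Equiv.Perm (Fin n), ∏ i, A i (σ i) := by
    apply Fintype.sum_equiv (Equiv.inv (Equiv.Perm (Fin n)))
    intro σ
    simp only [Equiv.inv_apply]
    rw [← Equiv.prod_comp σ (fun i => A i (σ⁻¹ i))]
    simp
  rw [hre]
  have h2 : (2 : ℝ) ^ n ≠ 0 := by positivity
  field_simp
end

section
/- (Glynn's Theorem) Let n ≥ 1 and let A be an n×n real matrix. Then perm(A) = (1/2^{n−1}) · ∑_{s} ∏_{i=1}^n ( s_i · ∑_{j=1}^n A_{i,j} s_j ), where the outer sum is over all 2^{n−1} vectors s = (s_1,…,s_n) ∈ {−1,+1}ⁿ with first coordinate s_1 = +1. -/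
open Finset Function

lemma sum_pm_pow (e : ℕ) :
    ∑ x ∈ ({-1, 1} : Finset ℝ), x ^ e = if Even e then 2 else 0 := by
  rw [Finset.sum_pair (by norm_num)]
  rcases Nat.even_or_odd e with h | h
  · rw [if_pos h, h.neg_one_pow, one_pow]; norm_num
  · rw [if_neg (by simpa [Nat.not_even_iff_odd] using h), h.neg_one_pow, one_pow]; ring

lemma prod_comp_pow {n : ℕ} (g : Fin n → Fin n) (s : Fin n → ℝ) :
    ∏ i, s (g i) = ∏ j, s j ^ (univ.filter fun i => g i = j).card := by
  rw [← Finset.prod_fiberwise_of_maps_to (g := g) (fun i _ => mem_univ (g i))]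
  refine Finset.prod_congr rfl fun j _ => ?_
  rw [Finset.prod_congr rfl (fun i hi => by rw [(mem_filter.mp hi).2]),
    Finset.prod_const]

lemma key_count {n : ℕ} (g : Fin n → Fin n) :
    ∑ s ∈ Fintype.piFinset (fun _ : Fin n => ({-1,1} : Finset ℝ)),
      ∏ i, (s i * s (g i)) =
    if Function.Bijective g then (2:ℝ)^n else 0 := by
  have h1 : ∀ s : Fin n → ℝ, ∏ i, (s i * s (g i)) =
      ∏ j, s j ^ (1 + (univ.filter fun i => g i = j).card) := by
    intro s
    rw [Finset.prod_mul_distrib, prod_comp_pow g s, ← Finset.prod_mul_distrib]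
    exact Finset.prod_congr rfl fun j _ => by rw [pow_add, pow_one]
  calc ∑ s ∈ Fintype.piFinset (fun _ : Fin n => ({-1,1} : Finset ℝ)),
        ∏ i, (s i * s (g i))
      = ∑ s ∈ Fintype.piFinset (fun _ : Fin n => ({-1,1} : Finset ℝ)),
        ∏ j, s j ^ (1 + (univ.filter fun i => g i = j).card) :=
        Finset.sum_congr rfl fun s _ => h1 s
    _ = ∏ j, ∑ x ∈ ({-1,1} : Finset ℝ),
          x ^ (1 + (univ.filter fun i => g i = j).card) :=
        (Finset.prod_univ_sum _ _).symm
    _ = ∏ j : Fin n, if Even (1 + (univ.filter fun i => g i = j).card) then (2:ℝ) else 0 :=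
        Finset.prod_congr rfl fun j _ => sum_pm_pow _
    _ = if Function.Bijective g then (2:ℝ)^n else 0 := by
        by_cases hg : Function.Bijective g
        · rw [if_pos hg]
          have hfib : ∀ j, (univ.filter fun i => g i = j).card = 1 := by
            intro j
            rw [Finset.card_eq_one]
            exact ⟨(Equiv.ofBijective g hg).symm j, by
              ext i
              simp only [mem_filter, mem_univ, true_and, mem_singleton]
              constructor
              · rintro rfl
                exact (hg.injective (Equiv.ofBijective_apply_symm_apply g hg (g i))).symm
              · rintro rfl
                exact Equiv.ofBijective_apply_symm_apply g hg j⟩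
          simp [hfib]
        · rw [if_neg hg]
          have : ¬ Function.Surjective g := fun h => hg h.bijective_of_finite
          obtain ⟨j, hj⟩ := not_forall.mp this
          refine Finset.prod_eq_zero (mem_univ j) ?_
          have : (univ.filter fun i => g i = j).card = 0 := by
            rw [Finset.card_eq_zero]
            ext i; simp only [mem_filter, mem_univ, true_and, notMem_empty, iff_false]
            exact fun h => hj ⟨i, h⟩
          simp [this]

lemma sum_bij_perm {n : ℕ} (A : Matrix (Fin n) (Fin n) ℝ) :
    ∑ g ∈ univ.filter (fun g : Fin n → Fin n => Function.Bijective g),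
      ∏ i, A i (g i) = A.permanent := by
  have h : ∑ σ ∈ (univ : Finset (Equiv.Perm (Fin n))), ∏ i, A i (σ i) =
      ∑ g ∈ univ.filter (fun g : Fin n → Fin n => Function.Bijective g), ∏ i, A i (g i) := by
    refine Finset.sum_bij (fun (σ : Equiv.Perm (Fin n)) (_ : σ ∈ univ) => (⇑σ : Fin n → Fin n))
      ?_ ?_ ?_ ?_
    · intro σ _; exact mem_filter.mpr ⟨mem_univ _, σ.bijective⟩
    · intro σ _ τ _ hστ; exact Equiv.coe_fn_injective hστ
    · intro g hg
      exact ⟨Equiv.ofBijective g (by simpa using hg), mem_univ _, rfl⟩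
    · intro σ _; rfl
  rw [← h, ← Matrix.permanent_transpose, Matrix.permanent]
  exact Finset.sum_congr rfl fun σ _ => Finset.prod_congr rfl fun i _ => rfl

lemma sum_all {n : ℕ} (A : Matrix (Fin n) (Fin n) ℝ) :
    ∑ s ∈ Fintype.piFinset (fun _ : Fin n => ({-1,1} : Finset ℝ)),
      ∏ i, (s i * ∑ j, A i j * s j) = 2 ^ n * A.permanent := by
  have step1 : ∀ s : Fin n → ℝ, ∏ i, (s i * ∑ j, A i j * s j) =
      ∑ g : Fin n → Fin n, ∏ i, (A i (g i) * (s i * s (g i))) := by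
    intro s
    calc ∏ i, (s i * ∑ j, A i j * s j)
        = ∏ i, ∑ j, A i j * (s i * s j) := by
          refine Finset.prod_congr rfl fun i _ => ?_
          rw [Finset.mul_sum]
          exact Finset.sum_congr rfl fun j _ => by ring
      _ = ∑ g : Fin n → Fin n, ∏ i, (A i (g i) * (s i * s (g i))) :=
          Fintype.prod_sum _
  calc ∑ s ∈ Fintype.piFinset (fun _ : Fin n => ({-1,1} : Finset ℝ)),
        ∏ i, (s i * ∑ j, A i j * s j)
      = ∑ s ∈ Fintype.piFinset (fun _ : Fin n => ({-1,1} : Finset ℝ)),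
        ∑ g : Fin n → Fin n, ∏ i, (A i (g i) * (s i * s (g i))) :=
        Finset.sum_congr rfl fun s _ => step1 s
    _ = ∑ g : Fin n → Fin n, ∑ s ∈ Fintype.piFinset (fun _ : Fin n => ({-1,1} : Finset ℝ)),
        ∏ i, (A i (g i) * (s i * s (g i))) := Finset.sum_comm
    _ = ∑ g : Fin n → Fin n, (∏ i, A i (g i)) *
          (if Function.Bijective g then (2:ℝ)^n else 0) := by
        refine Finset.sum_congr rfl fun g _ => ?_
        rw [← key_count g, Finset.mul_sum]
        exact Finset.sum_congr rfl fun s _ => by rw [Finset.prod_mul_distrib]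
    _ = 2 ^ n * A.permanent := by
        rw [← sum_bij_perm A, Finset.mul_sum]
        rw [Finset.sum_filter]
        refine Finset.sum_congr rfl fun g _ => ?_
        by_cases hg : Function.Bijective g <;> simp [hg, mul_comm]

/-- **Glynn's Theorem**: for `n ≥ 1`, the permanent of an `n × n` real matrix is
`(1/2^{n-1})` times the sum over all `2^{n-1}` sign vectors `s ∈ {−1,+1}ⁿ` with
`s 1 = +1` of `∏ i, s i * ∑ j, A i j * s j`. -/
theorem glynn_theorem
    {n : ℕ} (hn : 0 < n) (A : Matrix (Fin n) (Fin n) ℝ) :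
    A.permanent =
      (1 / 2 ^ (n - 1) : ℝ) *
        ∑ s ∈ (Fintype.piFinset (fun _ : Fin n => ({-1, 1} : Finset ℝ))).filter
            (fun s => s ⟨0, hn⟩ = 1),
          ∏ i, s i * ∑ j, A i j * s j := by
  set P := Fintype.piFinset (fun _ : Fin n => ({-1, 1} : Finset ℝ)) with hP
  set F : (Fin n → ℝ) → ℝ := fun s => ∏ i, s i * ∑ j, A i j * s j with hF
  have hneg : ∀ s : Fin n → ℝ, F (fun i => -(s i)) = F s := by
    intro s
    refine Finset.prod_congr rfl fun i _ => ?_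
    have : ∑ j, A i j * -(s j) = -(∑ j, A i j * s j) := by
      rw [← Finset.sum_neg_distrib]
      exact Finset.sum_congr rfl fun j _ => by ring
    rw [this, neg_mul_neg]
  have hsplit : ∑ s ∈ P, F s =
      ∑ s ∈ P.filter (fun s => s ⟨0, hn⟩ = 1), F s +
      ∑ s ∈ P.filter (fun s => ¬ s ⟨0, hn⟩ = 1), F s :=
    (Finset.sum_filter_add_sum_filter_not P _ F).symm
  have hbij : ∑ s ∈ P.filter (fun s => ¬ s ⟨0, hn⟩ = 1), F s =
      ∑ s ∈ P.filter (fun s => s ⟨0, hn⟩ = 1), F s := by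
    refine Finset.sum_nbij' (i := fun s => fun i => -(s i)) (j := fun s => fun i => -(s i))
      ?_ ?_ ?_ ?_ ?_
    · intro s hs
      rw [mem_filter] at hs ⊢
      obtain ⟨hs1, hs2⟩ := hs
      rw [Fintype.mem_piFinset] at hs1 ⊢
      have h0 : s ⟨0, hn⟩ = -1 := by
        have := hs1 ⟨0, hn⟩
        simp only [Finset.mem_insert, Finset.mem_singleton] at this
        tauto
      refine ⟨fun i => ?_, by show -(s ⟨0, hn⟩) = 1; rw [h0]; norm_num⟩
      have := hs1 i
      simp only [Finset.mem_insert, Finset.mem_singleton] at this ⊢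
      rcases this with h | h <;> rw [h] <;> norm_num
    · intro s hs
      rw [mem_filter] at hs ⊢
      obtain ⟨hs1, hs2⟩ := hs
      rw [Fintype.mem_piFinset] at hs1 ⊢
      refine ⟨fun i => ?_, by show ¬(-(s ⟨0, hn⟩)) = 1; rw [hs2]; norm_num⟩
      have := hs1 i
      simp only [Finset.mem_insert, Finset.mem_singleton] at this ⊢
      rcases this with h | h <;> rw [h] <;> norm_num
    · intro s _; funext i; ring
    · intro s _; funext i; ring
    · intro s _; exact (hneg s).symm
  have hall : ∑ s ∈ P, F s = 2 ^ n * A.permanent := sum_all A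
  have key : 2 ^ n * A.permanent = 2 * ∑ s ∈ P.filter (fun s => s ⟨0, hn⟩ = 1), F s := by
    rw [← hall, hsplit, hbij]; ring
  have h2 : (2:ℝ) ^ n = 2 * 2 ^ (n - 1) := by
    rw [← pow_succ']
    congr 1
    omega
  rw [h2] at key
  have hpow : (2:ℝ) ^ (n-1) ≠ 0 := by positivity
  field_simp
  linarith [key]
end

section
/- Let A be an n×n real matrix. Then perm(A) = (2π)^{−n/2} · ∫_{ℝⁿ} e^{−(x_1²+⋯+x_n²)/2} ∏_{i=1}^n ( x_i · ∑_{j=1}^n A_{i,j} x_j ) dx, where the integral is with respect to Lebesgue measure on ℝⁿ. That is, the permanent is the expectation of ∏_i x_i (∑_j A_{i,j} x_j) over n i.i.d. standard normal random variables. -/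
open MeasureTheory Real


lemma pg_integrable (m : ℕ) :
    Integrable (fun x : ℝ => x ^ m * Real.exp (-(2⁻¹ : ℝ) * x ^ 2)) := by
  have h := integrable_rpow_mul_exp_neg_mul_sq (b := (2⁻¹ : ℝ)) (by norm_num)
    (s := (m : ℝ)) (by linarith [Nat.cast_nonneg (α := ℝ) m])
  simpa [Real.rpow_natCast] using h

lemma pg_moment_one : ∫ x : ℝ, x ^ 1 * Real.exp (-(2⁻¹ : ℝ) * x ^ 2) = 0 := by
  apply integral_eq_zero_of_hasDerivAt_of_integrable
    (f := fun x : ℝ => -Real.exp (-(2⁻¹ : ℝ) * x ^ 2))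
  · intro x
    have h : HasDerivAt (fun x : ℝ => -(2⁻¹ : ℝ) * x ^ 2) (-(2⁻¹ : ℝ) * (2 * x ^ 1)) x :=
      (hasDerivAt_pow 2 x).const_mul _
    have h2 := h.exp.neg
    convert h2 using 1
    · rfl
    ring
  · exact pg_integrable 1
  · exact (integrable_exp_neg_mul_sq (by norm_num)).neg

lemma pg_moment_two : ∫ x : ℝ, x ^ 2 * Real.exp (-(2⁻¹ : ℝ) * x ^ 2) = Real.sqrt (2 * π) := by
  have hderiv : ∀ x : ℝ, HasDerivAt (fun x : ℝ => -x * Real.exp (-(2⁻¹ : ℝ) * x ^ 2))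
      (x ^ 2 * Real.exp (-(2⁻¹ : ℝ) * x ^ 2) - Real.exp (-(2⁻¹ : ℝ) * x ^ 2)) x := by
    intro x
    have h : HasDerivAt (fun x : ℝ => -(2⁻¹ : ℝ) * x ^ 2) (-(2⁻¹ : ℝ) * (2 * x ^ 1)) x :=
      (hasDerivAt_pow 2 x).const_mul _
    have h2 := (hasDerivAt_id x).neg.mul h.exp
    refine h2.congr_deriv ?_
    simp
    ring
  have hint2 := pg_integrable 2
  have hint0 : Integrable (fun x : ℝ => Real.exp (-(2⁻¹ : ℝ) * x ^ 2)) :=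
    integrable_exp_neg_mul_sq (by norm_num)
  have h0 := integral_eq_zero_of_hasDerivAt_of_integrable hderiv (hint2.sub hint0)
    (by have := (pg_integrable 1).neg; simp only [pow_one] at this; exact this.congr (Filter.Eventually.of_forall fun x => by simp [neg_mul]))
  rw [integral_sub hint2 hint0] at h0
  have hg := integral_gaussian (2⁻¹ : ℝ)
  have : π / (2⁻¹ : ℝ) = 2 * π := by ring
  rw [this] at hg
  rw [hg] at h0
  linarith


def pgm {n : ℕ} (g : Fin n → Fin n) (k : Fin n) : ℕ :=
  1 + (Finset.univ.filter fun i => g i = k).card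

/-- The permanent as an expectation over `n` i.i.d. standard normal variables:
`perm(A) = (2π)^{-n/2} ∫_{ℝⁿ} e^{-‖x‖²/2} ∏ i, x i * ∑ j, A i j * x j dx`. -/
theorem permanent_eq_gaussian_expectation
    {n : ℕ} (A : Matrix (Fin n) (Fin n) ℝ) :
    A.permanent =
      (2 * π) ^ (-(n / 2 : ℝ)) *
        ∫ x : Fin n → ℝ, Real.exp (-(∑ i, x i ^ 2) / 2) * ∏ i, x i * ∑ j, A i j * x j := by
  classical
  have pgint : ∀ m : ℕ, Integrable (fun x : ℝ => x ^ m * Real.exp (-(2⁻¹ : ℝ) * x ^ 2)) :=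
    pg_integrable
  -- pointwise expansion of the integrand
  have key : ∀ x : Fin n → ℝ,
      Real.exp (-(∑ i, x i ^ 2) / 2) * ∏ i, x i * ∑ j, A i j * x j
      = ∑ g : Fin n → Fin n, (∏ i, A i (g i)) *
          ∏ k, x k ^ pgm g k * Real.exp (-(2⁻¹ : ℝ) * x k ^ 2) := by
    intro x
    have hexp : Real.exp (-(∑ i, x i ^ 2) / 2)
        = ∏ k, Real.exp (-(2⁻¹ : ℝ) * x k ^ 2) := by
      rw [← Real.exp_sum]
      congr 1
      rw [← Finset.mul_sum]
      ring
    have hprod : (∏ i, x i * ∑ j, A i j * x j)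
        = ∑ g : Fin n → Fin n, (∏ i, A i (g i)) * ∏ k, x k ^ pgm g k := by
      calc (∏ i, x i * ∑ j, A i j * x j) = ∏ i, ∑ j, x i * (A i j * x j) := by
            simp_rw [Finset.mul_sum]
        _ = ∑ g ∈ Fintype.piFinset (fun _ : Fin n => (Finset.univ : Finset (Fin n))),
              ∏ i, x i * (A i (g i) * x (g i)) := Finset.prod_univ_sum _ _
        _ = ∑ g : Fin n → Fin n, (∏ i, A i (g i)) * ∏ k, x k ^ pgm g k := by
            rw [Fintype.piFinset_univ]
            refine Finset.sum_congr rfl fun g _ => ?_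
            have h2 : (∏ i, x (g i))
                = ∏ k, x k ^ (Finset.univ.filter (fun i => g i = k)).card := by
              rw [← Finset.prod_fiberwise' Finset.univ g (fun k => x k)]
              exact Finset.prod_congr rfl fun k _ => Finset.prod_const _
            calc (∏ i, x i * (A i (g i) * x (g i)))
                = (∏ i, A i (g i)) * ((∏ i, x i) * ∏ i, x (g i)) := by
                  simp_rw [Finset.prod_mul_distrib]; ring
              _ = (∏ i, A i (g i)) * ∏ k, x k ^ pgm g k := by
                  rw [h2, ← Finset.prod_mul_distrib]
                  congr 1
                  exact Finset.prod_congr rfl fun k _ => by rw [pgm, pow_add, pow_one]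
    rw [hexp, hprod, Finset.mul_sum]
    refine Finset.sum_congr rfl fun g _ => ?_
    simp only [Finset.prod_mul_distrib]
    ring
  -- compute the integral
  have hI : (∫ x : Fin n → ℝ, Real.exp (-(∑ i, x i ^ 2) / 2) * ∏ i, x i * ∑ j, A i j * x j)
      = ∑ g : Fin n → Fin n, (∏ i, A i (g i)) *
          ∏ k, ∫ t : ℝ, t ^ pgm g k * Real.exp (-(2⁻¹ : ℝ) * t ^ 2) := by
    rw [integral_congr_ae (Filter.Eventually.of_forall key)]
    rw [integral_finset_sum _ (fun g _ => by exact
      (Integrable.fintype_prod (fun k => pgint (pgm g k))).const_mul _)]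
    refine Finset.sum_congr rfl fun g _ => ?_
    rw [integral_const_mul, integral_fintype_prod_volume_eq_prod
      (f := fun k t => t ^ pgm g k * Real.exp (-(2⁻¹ : ℝ) * t ^ 2))]
  rw [hI]
  -- only bijective g contribute
  have hzero : ∀ g : Fin n → Fin n, ¬ Function.Bijective g →
      (∏ i, A i (g i)) *
        ∏ k, (∫ t : ℝ, t ^ pgm g k * Real.exp (-(2⁻¹ : ℝ) * t ^ 2)) = 0 := by
    intro g hg
    have hns : ¬ Function.Surjective g := fun hs =>
      hg (Finite.surjective_iff_bijective.mp hs)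
    obtain ⟨k, hk⟩ := not_forall.mp hns
    have hfib : (Finset.univ.filter (fun i => g i = k)) = ∅ := by
      rw [Finset.filter_eq_empty_iff]
      intro i _
      exact fun h => hk ⟨i, h⟩
    have hmk : pgm g k = 1 := by rw [pgm]; simp [hfib]
    have hzk : (∫ t : ℝ, t ^ pgm g k * Real.exp (-(2⁻¹ : ℝ) * t ^ 2)) = 0 := by
      rw [hmk]; exact pg_moment_one
    have hp : (∏ k, ∫ t : ℝ, t ^ pgm g k * Real.exp (-(2⁻¹ : ℝ) * t ^ 2)) = 0 :=
      Finset.prod_eq_zero (Finset.mem_univ k) hzk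
    rw [hp, mul_zero]
  have hsum : (∑ g : Fin n → Fin n, (∏ i, A i (g i)) *
          ∏ k, ∫ t : ℝ, t ^ pgm g k * Real.exp (-(2⁻¹ : ℝ) * t ^ 2))
      = A.permanent * Real.sqrt (2 * π) ^ n := by
    rw [← Finset.sum_filter_of_ne (p := fun g => Function.Bijective g)
      (fun g _ h => by by_contra hb; exact h (hzero g hb))]
    have hperm : A.permanent = ∑ σ : Equiv.Perm (Fin n), ∏ i, A i (σ i) := by
      rw [← Matrix.permanent_transpose]
      simp [Matrix.permanent, Matrix.transpose_apply]
    rw [hperm, Finset.sum_mul]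
    refine Finset.sum_bij' (fun g hg => Equiv.ofBijective g (Finset.mem_filter.mp hg).2)
      (fun σ _ => ⇑σ) (fun _ _ => Finset.mem_univ _)
      (fun σ _ => Finset.mem_filter.mpr ⟨Finset.mem_univ _, σ.bijective⟩)
      (fun g hg => rfl) (fun σ _ => by ext i; rfl) ?_
    intro g hg
    have hbij := (Finset.mem_filter.mp hg).2
    have hmk : ∀ k, pgm g k = 2 := by
      intro k
      have hsing : (Finset.univ.filter (fun i => g i = k))
          = {(Equiv.ofBijective g hbij).symm k} := by
        ext i
        simp only [Finset.mem_filter, Finset.mem_univ, true_and, Finset.mem_singleton]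
        exact (Equiv.ofBijective g hbij).apply_eq_iff_eq_symm_apply
      rw [pgm, hsing, Finset.card_singleton]
    have hpk : (∏ k, ∫ t : ℝ, t ^ pgm g k * Real.exp (-(2⁻¹ : ℝ) * t ^ 2))
        = Real.sqrt (2 * π) ^ n := by
      rw [Finset.prod_congr rfl fun k _ => by rw [hmk k]]
      rw [Finset.prod_const, pg_moment_two]
      simp
    rw [hpk]
    rfl
  rw [hsum]
  -- final scalar arithmetic
  have h2π : (0 : ℝ) < 2 * π := by positivity
  have hs : Real.sqrt (2 * π) ^ n = (2 * π) ^ ((n : ℝ) / 2) := by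
    rw [Real.sqrt_eq_rpow, ← Real.rpow_natCast ((2 * π) ^ ((1 : ℝ) / 2)) n,
      ← Real.rpow_mul h2π.le]
    congr 1
    ring
  rw [hs, mul_comm A.permanent _, ← mul_assoc, ← Real.rpow_add h2π]
  norm_num
end

section
/- Let W be an n×n real symmetric positive definite matrix. Then ∑_{s ∈ {−1,+1}ⁿ} exp( (1/2) sᵀ W s ) = ( det(W⁻¹) / (2π)ⁿ )^{1/2} · ∫_{ℝⁿ} exp( −(1/2) φᵀ W⁻¹ φ ) ∏_{i=1}^n ( 2 cosh φ_i ) dφ, where the sum ranges over all 2ⁿ vectors s with entries in {−1,+1}, and the integral is with respect to Lebesgue measure on ℝⁿ. Equivalently, the spin sum equals the expectation of ∏_i 2 cosh φ_i when φ is a centered multivariate Gaussian vector with covariance matrix W. -/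
open MeasureTheory Real Matrix

namespace SpinAux

variable {n : ℕ}

lemma qform_eq (A : Matrix (Fin n) (Fin n) ℝ) (φ : Fin n → ℝ) :
    ∑ i, ∑ j, φ i * A i j * φ j = φ ⬝ᵥ A.mulVec φ := by
  simp [Matrix.mulVec, dotProduct, Finset.mul_sum, mul_assoc]

lemma cosh_prod (φ : Fin n → ℝ) :
    (∏ i, 2 * Real.cosh (φ i)) =
      ∑ s ∈ Fintype.piFinset (fun _ : Fin n => ({-1, 1} : Finset ℝ)),
        Real.exp (∑ i, s i * φ i) := by
  have h1 : ∀ i : Fin n, 2 * Real.cosh (φ i) = ∑ c ∈ ({-1, 1} : Finset ℝ), Real.exp (c * φ i) := by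
    intro i
    rw [Real.cosh_eq]
    norm_num [Finset.sum_pair (by norm_num : (-1:ℝ) ≠ 1)]
    ring
  simp_rw [h1]
  rw [Finset.prod_univ_sum]
  simp_rw [← Real.exp_sum]

lemma gauss1 : ∫ x : ℝ, Real.exp (-(1/2) * x ^ 2) = Real.sqrt (2 * π) := by
  have := integral_gaussian (1/2)
  simp only [neg_mul] at this ⊢
  rw [this, div_div_eq_mul_div, div_one, mul_comm]

lemma gauss1_int : Integrable (fun x : ℝ => Real.exp (-(1/2) * x ^ 2)) := by
  have := integrable_exp_neg_mul_sq (by norm_num : (0:ℝ) < 1/2)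
  simpa [neg_mul] using this

lemma gauss_pi :
    ∫ ψ : Fin n → ℝ, Real.exp (-(1/2) * ∑ i, ψ i ^ 2) = Real.sqrt (2 * π) ^ n := by
  have : ∀ ψ : Fin n → ℝ, Real.exp (-(1/2) * ∑ i, ψ i ^ 2)
      = ∏ i, Real.exp (-(1/2) * ψ i ^ 2) := by
    intro ψ
    rw [← Real.exp_sum, Finset.mul_sum]
  simp_rw [this]
  rw [volume_pi, MeasureTheory.integral_fintype_prod_eq_pow (ι := Fin n) (fun x : ℝ => Real.exp (-(1/2) * x ^ 2)),
    gauss1, Fintype.card_fin]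

lemma gauss_pi_int :
    Integrable (fun ψ : Fin n → ℝ => Real.exp (-(1/2) * ∑ i, ψ i ^ 2)) := by
  have : ∀ ψ : Fin n → ℝ, Real.exp (-(1/2) * ∑ i, ψ i ^ 2)
      = ∏ i, Real.exp (-(1/2) * ψ i ^ 2) := by
    intro ψ
    rw [← Real.exp_sum, Finset.mul_sum]
  simp_rw [this]
  exact Integrable.fintype_prod (fun _ => gauss1_int)

lemma cov_integral (B : Matrix (Fin n) (Fin n) ℝ) (hB : B.det ≠ 0)
    (f : (Fin n → ℝ) → ℝ) (hf : Integrable f) :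
    Integrable (fun φ : Fin n → ℝ => f (B.mulVec φ)) ∧
      ∫ φ : Fin n → ℝ, f (B.mulVec φ) = |B.det|⁻¹ * ∫ ψ : Fin n → ℝ, f ψ := by
  have hmap : Measure.map (Matrix.toLin' B) volume
      = ENNReal.ofReal |B.det⁻¹| • volume :=
    Real.map_matrix_volume_pi_eq_smul_volume_pi hB
  have hT : Measurable (Matrix.toLin' B) :=
    (Matrix.toLin' B).continuous_of_finiteDimensional.measurable
  have hfs : AEStronglyMeasurable f (Measure.map (Matrix.toLin' B) volume) := by
    rw [hmap]; exact (hf.smul_measure ENNReal.ofReal_ne_top).1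
  have happ : ∀ φ, (Matrix.toLin' B) φ = B.mulVec φ := fun φ => Matrix.toLin'_apply B φ
  constructor
  · have := (integrable_map_measure hfs hT.aemeasurable).1
      (by rw [hmap]; exact hf.smul_measure ENNReal.ofReal_ne_top)
    simpa [happ, Function.comp_def] using this
  · have h1 : ∫ ψ, f ψ ∂(Measure.map (Matrix.toLin' B) volume) = ∫ φ, f (B.mulVec φ) := by
      rw [integral_map hT.aemeasurable hfs]
      simp_rw [happ]
    rw [← h1, hmap, integral_smul_measure]
    rw [ENNReal.toReal_ofReal (abs_nonneg _), abs_inv, smul_eq_mul]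

lemma complete_square {A : Matrix (Fin n) (Fin n) ℝ} (hA : A.IsSymm)
    {m c : Fin n → ℝ} (hm : A.mulVec m = c) (φ : Fin n → ℝ) :
    (φ - m) ⬝ᵥ A.mulVec (φ - m)
      = φ ⬝ᵥ A.mulVec φ - 2 * (c ⬝ᵥ φ) + c ⬝ᵥ m := by
  have hmAφ : m ⬝ᵥ A.mulVec φ = c ⬝ᵥ φ := by
    rw [Matrix.dotProduct_mulVec, ← Matrix.mulVec_transpose, hA.eq, hm]
  have hφAm : φ ⬝ᵥ A.mulVec m = c ⬝ᵥ φ := by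
    rw [hm, dotProduct_comm]
  rw [Matrix.mulVec_sub, dotProduct_sub, sub_dotProduct,
    sub_dotProduct, hmAφ, hφAm, hm, dotProduct_comm m c]
  ring

lemma exponent_id {W : Matrix (Fin n) (Fin n) ℝ} (hWsymm : W.IsSymm)
    (hWdet : IsUnit W.det) (s φ : Fin n → ℝ) :
    -(1/2) * (φ ⬝ᵥ W⁻¹.mulVec φ) + s ⬝ᵥ φ
      = -(1/2) * ((φ - W.mulVec s) ⬝ᵥ W⁻¹.mulVec (φ - W.mulVec s))
          + (1/2) * (s ⬝ᵥ W.mulVec s) := by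
  have hAsymm : (W⁻¹).IsSymm := by
    rw [Matrix.IsSymm, Matrix.transpose_nonsing_inv, hWsymm.eq]
  have hm : W⁻¹.mulVec (W.mulVec s) = s := by
    rw [Matrix.mulVec_mulVec, Matrix.nonsing_inv_mul _ hWdet, Matrix.one_mulVec]
  have key := complete_square hAsymm hm φ
  rw [key, dotProduct_comm s (W.mulVec s)]
  ring

end SpinAux
open SpinAux
open scoped MatrixOrder

/-- The spin sum `∑_{s ∈ {−1,+1}ⁿ} exp((1/2) sᵀ W s)` equals the Gaussian
expectation of `∏ i, 2 cosh φ i` for a centered Gaussian vector `φ` with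
covariance matrix `W` (written out as an explicit Lebesgue integral). -/
theorem spin_sum_eq_gaussian_cosh
    {n : ℕ} (W : Matrix (Fin n) (Fin n) ℝ) (hWsymm : W.IsSymm) (hWpos : W.PosDef) :
    ∑ s ∈ Fintype.piFinset (fun _ : Fin n => ({-1, 1} : Finset ℝ)),
        Real.exp ((1 / 2) * ∑ i, ∑ j, s i * W i j * s j) =
      Real.sqrt (W⁻¹.det / (2 * π) ^ n) *
        ∫ φ : Fin n → ℝ,
          Real.exp (-(1 / 2) * ∑ i, ∑ j, φ i * W⁻¹ i j * φ j) *
            ∏ i, 2 * Real.cosh (φ i) := by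
  classical
  set A := W⁻¹ with hAdef
  have hWdet : IsUnit W.det := isUnit_iff_ne_zero.mpr hWpos.det_pos.ne'
  have hApos : A.PosDef := hWpos.inv
  have hdetA : 0 < A.det := hApos.det_pos
  set B := CFC.sqrt A with hBdef
  have hBmul : B * B = A := CFC.sqrt_mul_sqrt_self A hApos.posSemidef.nonneg
  have hBpsd : B.PosSemidef := (CFC.sqrt_nonneg A).posSemidef
  have hBsymm : Bᵀ = B := by
    have := hBpsd.isHermitian
    rwa [Matrix.IsHermitian, Matrix.conjTranspose_eq_transpose_of_trivial] at this
  have hdetB : B.det * B.det = A.det := by rw [← Matrix.det_mul, hBmul]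
  have hdetBne : B.det ≠ 0 := by
    intro h; rw [h, mul_zero] at hdetB; exact hdetA.ne' hdetB.symm
  have habs : |B.det| = Real.sqrt A.det := by
    rw [← hdetB, ← pow_two, Real.sqrt_sq_eq_abs]
  -- quadratic form through B
  have hq : ∀ ψ : Fin n → ℝ, ψ ⬝ᵥ A.mulVec ψ = ∑ i, (B.mulVec ψ) i ^ 2 := by
    intro ψ
    have h1 : ψ ⬝ᵥ A.mulVec ψ = (B.mulVec ψ) ⬝ᵥ (B.mulVec ψ) := by
      rw [← hBmul, ← Matrix.mulVec_mulVec, Matrix.dotProduct_mulVec, ← Matrix.mulVec_transpose,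
        hBsymm]
    rw [h1]
    simp [dotProduct, pow_two]
  -- the centered Gaussian integral
  set g : (Fin n → ℝ) → ℝ := fun ψ => Real.exp (-(1/2) * ∑ i, ψ i ^ 2) with hgdef
  have hgi : Integrable g := gauss_pi_int
  have hcov := cov_integral B hdetBne g hgi
  have hgB : ∀ ψ : Fin n → ℝ, Real.exp (-(1/2) * (ψ ⬝ᵥ A.mulVec ψ)) = g (B.mulVec ψ) := by
    intro ψ; rw [hgdef]; simp only [hq ψ]
  have hint_center : Integrable (fun ψ : Fin n → ℝ => Real.exp (-(1/2) * (ψ ⬝ᵥ A.mulVec ψ))) := by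
    simp_rw [hgB]; exact hcov.1
  have hval_center : ∫ ψ : Fin n → ℝ, Real.exp (-(1/2) * (ψ ⬝ᵥ A.mulVec ψ))
      = |B.det|⁻¹ * Real.sqrt (2 * π) ^ n := by
    simp_rw [hgB]
    rw [hcov.2, hgdef, gauss_pi]
  -- per-spin integrand
  have hint : ∀ s : Fin n → ℝ,
      Integrable (fun φ : Fin n → ℝ => Real.exp (-(1/2) * (φ ⬝ᵥ A.mulVec φ) + s ⬝ᵥ φ)) := by
    intro s
    have : ∀ φ : Fin n → ℝ, Real.exp (-(1/2) * (φ ⬝ᵥ A.mulVec φ) + s ⬝ᵥ φ)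
        = Real.exp ((1/2) * (s ⬝ᵥ W.mulVec s)) *
            Real.exp (-(1/2) * ((φ - W.mulVec s) ⬝ᵥ A.mulVec (φ - W.mulVec s))) := by
      intro φ
      rw [← Real.exp_add, exponent_id hWsymm hWdet s φ, hAdef]
      ring_nf
    simp_rw [this]
    exact (hint_center.comp_sub_right (W.mulVec s)).const_mul _
  have hval : ∀ s : Fin n → ℝ,
      ∫ φ : Fin n → ℝ, Real.exp (-(1/2) * (φ ⬝ᵥ A.mulVec φ) + s ⬝ᵥ φ)
        = Real.exp ((1/2) * (s ⬝ᵥ W.mulVec s)) * (|B.det|⁻¹ * Real.sqrt (2 * π) ^ n) := by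
    intro s
    have heq : ∀ φ : Fin n → ℝ, Real.exp (-(1/2) * (φ ⬝ᵥ A.mulVec φ) + s ⬝ᵥ φ)
        = Real.exp ((1/2) * (s ⬝ᵥ W.mulVec s)) *
            Real.exp (-(1/2) * ((φ - W.mulVec s) ⬝ᵥ A.mulVec (φ - W.mulVec s))) := by
      intro φ
      rw [← Real.exp_add, exponent_id hWsymm hWdet s φ, hAdef]
      ring_nf
    simp_rw [heq]
    rw [integral_const_mul]
    congr 1
    calc ∫ φ : Fin n → ℝ, Real.exp (-(1/2) * ((φ - W.mulVec s) ⬝ᵥ A.mulVec (φ - W.mulVec s)))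
        = ∫ φ : Fin n → ℝ, Real.exp (-(1/2) * (φ ⬝ᵥ A.mulVec φ)) := by
          simp_rw [sub_eq_add_neg]
          exact integral_add_right_eq_self
            (fun φ => Real.exp (-(1/2) * (φ ⬝ᵥ A.mulVec φ))) (-(W.mulVec s))
      _ = |B.det|⁻¹ * Real.sqrt (2 * π) ^ n := hval_center
  -- transform the RHS integrand
  have hrhs : ∫ φ : Fin n → ℝ,
        Real.exp (-(1 / 2) * ∑ i, ∑ j, φ i * A i j * φ j) * ∏ i, 2 * Real.cosh (φ i)
      = ∑ s ∈ Fintype.piFinset (fun _ : Fin n => ({-1, 1} : Finset ℝ)),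
          Real.exp ((1/2) * (s ⬝ᵥ W.mulVec s)) * (|B.det|⁻¹ * Real.sqrt (2 * π) ^ n) := by
    have : ∀ φ : Fin n → ℝ,
        Real.exp (-(1 / 2) * ∑ i, ∑ j, φ i * A i j * φ j) * ∏ i, 2 * Real.cosh (φ i)
          = ∑ s ∈ Fintype.piFinset (fun _ : Fin n => ({-1, 1} : Finset ℝ)),
              Real.exp (-(1/2) * (φ ⬝ᵥ A.mulVec φ) + s ⬝ᵥ φ) := by
      intro φ
      rw [qform_eq, cosh_prod, Finset.mul_sum]
      congr 1 with s
      rw [← Real.exp_add]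
      rfl
    simp_rw [this]
    rw [integral_finset_sum _ (fun s _ => hint s)]
    exact Finset.sum_congr rfl fun s _ => hval s
  rw [hrhs]
  have hq2 : ∀ s : Fin n → ℝ, ∑ i, ∑ j, s i * W i j * s j = s ⬝ᵥ W.mulVec s :=
    fun s => qform_eq W s
  simp_rw [hq2]
  have h2π : (0:ℝ) < 2 * π := by positivity
  have hsqrt2π : Real.sqrt ((2*π) ^ n) = Real.sqrt (2*π) ^ n := by
    rw [← Real.sqrt_mul_self (pow_nonneg (Real.sqrt_nonneg _) n), ← mul_pow,
      Real.mul_self_sqrt h2π.le]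
  have hpow_ne : Real.sqrt (2*π) ^ n ≠ 0 := pow_ne_zero _ (Real.sqrt_pos.mpr h2π).ne'
  have habs_ne : |B.det| ≠ 0 := abs_ne_zero.mpr hdetBne
  have hconst : Real.sqrt (A.det / (2 * π) ^ n) * (|B.det|⁻¹ * Real.sqrt (2 * π) ^ n) = 1 := by
    rw [Real.sqrt_div hdetA.le, hsqrt2π, ← habs]
    field_simp
  rw [← Finset.sum_mul, mul_comm ((Fintype.piFinset fun _ : Fin n => ({-1,1}:Finset ℝ)).sum _),
    ← mul_assoc, hconst, one_mul]
end

section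
/- Let A be an n×n real matrix and define F : ℝⁿ → ℝ by F(x) = ∑_{s ∈ {−1,+1}ⁿ} exp( (1/2) ∑_{i,j=1}^n s_i x_i A_{i,j} s_j ), the n-spin partition function with interaction matrix X A (X = diag(x_1,…,x_n)). Then the permanent of A equals the mixed partial derivative ∂ⁿF/∂x_1 ∂x_2 ⋯ ∂x_n evaluated at x = 0; equivalently, perm(A) is the value of the n-th iterated Fréchet derivative of F at 0 applied to the tuple of standard basis vectors (e_1,…,e_n) of ℝⁿ. -/
open Finset

/-- mixed derivative of exp of a linear functional -/
lemma aux_exp_lin (n : ℕ) (c : Fin n → ℝ) :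
    iteratedFDeriv ℝ n (fun x : Fin n → ℝ => Real.exp (∑ i, c i * x i)) 0
      (fun k : Fin n => Pi.single k 1) = ∏ i, c i := by
  set L : (Fin n → ℝ) →L[ℝ] ℝ :=
    ∑ i, c i • (ContinuousLinearMap.proj i : (Fin n → ℝ) →L[ℝ] ℝ) with hLdef
  have hL : ∀ x, L x = ∑ i, c i * x i := by
    intro x
    simp [hLdef, ContinuousLinearMap.sum_apply]
  have hfun : (fun x : Fin n → ℝ => Real.exp (∑ i, c i * x i)) = Real.exp ∘ L := by
    funext x; simp [hL, Function.comp]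
  rw [hfun, L.iteratedFDeriv_comp_right (Real.contDiff_exp (n := ⊤)) 0 le_top,
    ContinuousMultilinearMap.compContinuousLinearMap_apply]
  have hLk : ∀ k : Fin n, L (Pi.single k 1) = c k := by
    intro k
    rw [hL]
    simp [Pi.single_apply]
  simp only [map_zero, hLk]
  rw [iteratedFDeriv_apply_eq_iteratedDeriv_mul_prod, iteratedDeriv_eq_iterate,
    Real.iter_deriv_exp, Real.exp_zero, smul_eq_mul, mul_one]

lemma aux_spin_sum (n : ℕ) (f : Fin n → Fin n) :
    ∑ s ∈ Fintype.piFinset (fun _ : Fin n => ({-1, 1} : Finset ℝ)),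
      ∏ i, s i * s (f i) = if Function.Bijective f then (2 : ℝ) ^ n else 0 := by
  classical
  set d : Fin n → ℕ := fun k => #{i | f i = k} with hd
  have hprod : ∀ s : Fin n → ℝ, (∏ i, s i * s (f i)) = ∏ k, (s k) ^ (d k + 1) := by
    intro s
    rw [Finset.prod_mul_distrib]
    have h1 : (∏ i, s (f i)) = ∏ k, (s k) ^ (d k) := by
      rw [← Finset.prod_fiberwise' Finset.univ f s]
      exact Finset.prod_congr rfl fun k _ => by rw [Finset.prod_const]
    rw [h1, ← Finset.prod_mul_distrib]
    exact Finset.prod_congr rfl fun k _ => by rw [pow_succ]; ring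
  rw [Finset.sum_congr rfl fun s _ => hprod s,
    ← Finset.prod_univ_sum (fun _ => ({-1, 1} : Finset ℝ)) (fun k t => t ^ (d k + 1))]
  have hpair : ∀ e : ℕ, ∑ t ∈ ({-1, 1} : Finset ℝ), t ^ e = (-1 : ℝ) ^ e + 1 := by
    intro e
    rw [Finset.sum_pair (by norm_num : (-1 : ℝ) ≠ 1), one_pow]
  have hsumd : ∑ k, d k = n := by
    have h := Finset.sum_fiberwise (Finset.univ : Finset (Fin n)) f (fun _ => (1 : ℕ))
    simp only [Finset.sum_const, smul_eq_mul, mul_one, Finset.card_univ, Fintype.card_fin] at h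
    exact h
  by_cases hbij : Function.Bijective f
  · rw [if_pos hbij]
    have e := Equiv.ofBijective f hbij
    have hdk : ∀ k, d k = 1 := by
      intro k
      have : ({i | f i = k} : Finset (Fin n)) = {(Equiv.ofBijective f hbij).symm k} := by
        ext i
        simp only [Finset.mem_filter, Finset.mem_univ, true_and, Finset.mem_singleton]
        constructor
        · intro h; exact ((Equiv.ofBijective f hbij).eq_symm_apply).2 h
        · intro h; exact ((Equiv.ofBijective f hbij).eq_symm_apply).1 h
      rw [hd]; simp only [this, Finset.card_singleton]
    rw [Finset.prod_congr rfl fun k _ => by rw [hpair, hdk k]]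
    norm_num
  · rw [if_neg hbij]
    have : ∃ k, ¬ Odd (d k) := by
      by_contra h
      push_neg at h
      have h1 : ∀ k ∈ Finset.univ, 1 ≤ d k := fun k _ => (h k).pos
      have h2 : ∀ k, d k = 1 := by
        have := (Finset.sum_eq_sum_iff_of_le h1).1 ?_
        · intro k; exact (this k (Finset.mem_univ k)).symm
        · simp [hsumd]
      have hinj : Function.Injective f := by
        intro a b hab
        have ha : a ∈ ({i | f i = f b} : Finset (Fin n)) := by simp [hab]
        have hb : b ∈ ({i | f i = f b} : Finset (Fin n)) := by simp
        have : #{i | f i = f b} ≤ 1 := le_of_eq (h2 (f b))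
        exact Finset.card_le_one.1 this a ha b hb
      exact hbij (Finite.injective_iff_bijective.1 hinj)
    obtain ⟨k, hk⟩ := this
    refine Finset.prod_eq_zero (Finset.mem_univ k) ?_
    rw [hpair, Nat.odd_add_one.2 hk |>.neg_one_pow]
    ring

/-- The permanent of `A` as the mixed partial derivative `∂ⁿF/∂x_1⋯∂x_n` at `0`
of the `n`-spin partition function `F(x) = ∑_{s ∈ {±1}ⁿ} exp((1/2) ∑_{i,j} s i * x i * A i j * s j)`,
expressed via the `n`-th iterated Fréchet derivative applied to the standard
basis vectors. -/
theorem permanent_eq_iteratedFDeriv_spin_partition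
    {n : ℕ} (A : Matrix (Fin n) (Fin n) ℝ) :
    let F : (Fin n → ℝ) → ℝ := fun x =>
      ∑ s ∈ Fintype.piFinset (fun _ : Fin n => ({-1, 1} : Finset ℝ)),
        Real.exp ((1 / 2) * ∑ i, ∑ j, s i * x i * A i j * s j)
    iteratedFDeriv ℝ n F 0 (fun k : Fin n => Pi.single k 1) = A.permanent := by
  classical
  intro F
  set c : (Fin n → ℝ) → Fin n → ℝ := fun s i => 1 / 2 * (s i * ∑ j, A i j * s j) with hc
  have hF : F = fun x => ∑ s ∈ Fintype.piFinset (fun _ : Fin n => ({-1, 1} : Finset ℝ)),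
      (fun y : Fin n → ℝ => Real.exp (∑ i, c s i * y i)) x := by
    funext x
    refine Finset.sum_congr rfl fun s _ => ?_
    congr 1
    rw [Finset.mul_sum]
    refine Finset.sum_congr rfl fun i _ => ?_
    rw [hc]
    simp only []
    rw [Finset.mul_sum, Finset.mul_sum, Finset.mul_sum, Finset.sum_mul]
    exact Finset.sum_congr rfl fun j _ => by ring
  have hcd : ∀ s ∈ Fintype.piFinset (fun _ : Fin n => ({-1, 1} : Finset ℝ)),
      ContDiff ℝ n (fun y : Fin n → ℝ => Real.exp (∑ i, c s i * y i)) := by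
    intro s _
    apply Real.contDiff_exp.comp
    apply ContDiff.sum
    intro i _
    exact (contDiff_const.mul (contDiff_apply ℝ ℝ i))
  rw [hF, iteratedFDeriv_sum hcd]
  simp only [Finset.sum_apply, ContinuousMultilinearMap.sum_apply]
  rw [Finset.sum_congr rfl fun s _ => aux_exp_lin n (c s)]
  -- now combinatorics
  have step : ∀ s : Fin n → ℝ, (∏ i, c s i) =
      ∑ f ∈ Fintype.piFinset (fun _ : Fin n => (Finset.univ : Finset (Fin n))),
        (∏ i, (1 / 2 : ℝ) * A i (f i)) * ∏ i, s i * s (f i) := by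
    intro s
    have h1 : ∀ i, c s i = ∑ j, (1 / 2 * A i j) * (s i * s j) := by
      intro i
      rw [hc]
      simp only []
      rw [Finset.mul_sum, Finset.mul_sum]
      exact Finset.sum_congr rfl fun j _ => by ring
    rw [Finset.prod_congr rfl fun i _ => h1 i,
      Finset.prod_univ_sum (fun _ => (Finset.univ : Finset (Fin n)))]
    exact Finset.sum_congr rfl fun f _ => by rw [Finset.prod_mul_distrib]
  rw [Finset.sum_congr rfl fun s _ => step s, Finset.sum_comm]
  have step2 : ∀ f : Fin n → Fin n,
      (∑ s ∈ Fintype.piFinset (fun _ : Fin n => ({-1, 1} : Finset ℝ)),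
        (∏ i, (1 / 2 : ℝ) * A i (f i)) * ∏ i, s i * s (f i)) =
      if Function.Bijective f then ∏ i, A i (f i) else 0 := by
    intro f
    rw [← Finset.mul_sum, aux_spin_sum]
    by_cases hbij : Function.Bijective f
    · rw [if_pos hbij, if_pos hbij, Finset.prod_mul_distrib]
      rw [Finset.prod_const, Finset.card_univ, Fintype.card_fin, mul_comm (((1:ℝ)/2)^n) _, mul_assoc, ← mul_pow]
      norm_num
    · rw [if_neg hbij, if_neg hbij, mul_zero]
  rw [Finset.sum_congr rfl fun f _ => step2 f]
  rw [Finset.sum_ite, Finset.sum_const_zero, add_zero]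
  -- sum over bijective f equals permanent
  rw [Matrix.permanent]
  have hperm : ∑ σ : Equiv.Perm (Fin n), ∏ i, A (σ i) i
      = ∑ σ : Equiv.Perm (Fin n), ∏ i, A i (σ i) := by
    rw [← Equiv.sum_comp (Equiv.inv (Equiv.Perm (Fin n)))]
    refine Finset.sum_congr rfl fun σ _ => ?_
    simp only [Equiv.inv_apply]
    rw [← Equiv.prod_comp σ (fun i => A (σ⁻¹ i) i)]
    simp
  rw [hperm]
  refine Finset.sum_bij (fun f hf => Equiv.ofBijective f (by
      simpa using (Finset.mem_filter.1 hf).2)) ?_ ?_ ?_ ?_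
  · intro f hf; exact Finset.mem_univ _
  · intro f hf g hg h
    have : ⇑(Equiv.ofBijective f _) = ⇑(Equiv.ofBijective g _) := congrArg _ h
    simpa [Equiv.ofBijective] using this
  · intro σ _
    refine ⟨⇑σ, ?_, ?_⟩
    · refine Finset.mem_filter.2 ⟨?_, σ.bijective⟩
      simp [Fintype.mem_piFinset]
    · ext i; simp [Equiv.ofBijective]
  · intro f hf
    rfl
end

section
/- Let n be a natural number and let f, g : ℝ → ℝ be measurable functions such that for every k ∈ ℕ with k ≤ n+1 the function x ↦ g(x)·f(x)^k is Lebesgue integrable, and satisfying ∫_ℝ g(x) f(x) dx = 0 and ∫_ℝ g(x) f(x)² dx = 1. Then for every n×n real matrix A, perm(A) = ∫_{ℝⁿ} ∏_{i=1}^n ( g(x_i) · f(x_i) · ∑_{j=1}^n A_{i,j} f(x_j) ) dx, where the integral is with respect to Lebesgue measure on ℝⁿ. -/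
open MeasureTheory

/-- Generalized probabilistic representation of the permanent: if the weight `g`
integrated against `f` gives `0` and against `f²` gives `1` (with the needed
integrability), then `perm(A) = ∫_{ℝⁿ} ∏ i, g (x i) * f (x i) * ∑ j, A i j * f (x j) dx`. -/
theorem permanent_eq_integral_weight
    {n : ℕ} (f g : ℝ → ℝ) (hf : Measurable f) (hg : Measurable g)
    (hint : ∀ k : ℕ, k ≤ n + 1 → Integrable (fun x : ℝ => g x * f x ^ k))
    (hmean : ∫ x : ℝ, g x * f x = 0) (hvar : ∫ x : ℝ, g x * f x ^ 2 = 1)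
    (A : Matrix (Fin n) (Fin n) ℝ) :
    A.permanent =
      ∫ x : Fin n → ℝ, ∏ i, g (x i) * f (x i) * ∑ j, A i j * f (x j) := by
  classical
  -- multiplicity of `j` as a value of `d`
  set m : (Fin n → Fin n) → Fin n → ℕ :=
    fun d j => (Finset.univ.filter fun i => d i = j).card with hm
  have hmle : ∀ d j, 1 + m d j ≤ n + 1 := by
    intro d j
    have : m d j ≤ n := by
      simpa using (Finset.card_filter_le Finset.univ fun i => d i = j)
    omega
  -- pointwise expansion of the integrand
  have expand : (fun x : Fin n → ℝ => ∏ i, g (x i) * f (x i) * ∑ j, A i j * f (x j))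
      = fun x : Fin n → ℝ => ∑ d : Fin n → Fin n,
          (∏ i, A i (d i)) * ∏ j, g (x j) * f (x j) ^ (1 + m d j) := by
    funext x
    rw [Finset.prod_mul_distrib, Finset.prod_univ_sum, Finset.mul_sum]
    refine Finset.sum_congr rfl fun d _ => ?_
    simp only [Finset.prod_mul_distrib]
    have h1 : (∏ i, f (x (d i))) = ∏ j, f (x j) ^ m d j := by
      rw [← Finset.prod_fiberwise' Finset.univ d fun j => f (x j)]
      exact Finset.prod_congr rfl fun j _ => (Finset.prod_const _)
    have h3 : (∏ j, f (x j) ^ (1 + m d j)) = (∏ j, f (x j)) * ∏ j, f (x j) ^ m d j := by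
      rw [← Finset.prod_mul_distrib]
      exact Finset.prod_congr rfl fun j _ => by ring
    rw [h1, h3]
    ring
  -- integrability of each factor and each term
  have hjint : ∀ (d : Fin n → Fin n) (j : Fin n),
      Integrable (fun x : ℝ => g x * f x ^ (1 + m d j)) :=
    fun d j => hint _ (hmle d j)
  have hterm : ∀ d : Fin n → Fin n,
      Integrable (fun x : Fin n → ℝ =>
        (∏ i, A i (d i)) * ∏ j, g (x j) * f (x j) ^ (1 + m d j)) := by
    intro d
    exact (Integrable.fintype_prod (f := fun j (y : ℝ) => g y * f y ^ (1 + m d j))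
      (fun j => hjint d j)).const_mul _
  -- compute the integral
  rw [expand, integral_finset_sum _ fun d _ => hterm d]
  have hI : ∀ d : Fin n → Fin n,
      (∫ x : Fin n → ℝ, (∏ i, A i (d i)) * ∏ j, g (x j) * f (x j) ^ (1 + m d j))
      = (∏ i, A i (d i)) * ∏ j, ∫ y : ℝ, g y * f y ^ (1 + m d j) := by
    intro d
    rw [integral_const_mul,
      integral_fintype_prod_volume_eq_prod (ι := Fin n) fun j (y : ℝ) => g y * f y ^ (1 + m d j)]
  simp_rw [hI]
  -- the value of each term
  set t : (Fin n → Fin n) → ℝ :=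
    fun d => (∏ i, A i (d i)) * ∏ j, ∫ y : ℝ, g y * f y ^ (1 + m d j) with ht
  have hzero : ∀ d : Fin n → Fin n, ¬ Function.Bijective d → t d = 0 := by
    intro d hd
    have hsurj : ¬ Function.Surjective d := fun h =>
      hd (Finite.surjective_iff_bijective.mp h)
    obtain ⟨j, hj⟩ := not_forall.mp hsurj
    have hmj : m d j = 0 := by
      rw [hm]
      simp only [Finset.card_eq_zero, Finset.filter_eq_empty_iff]
      intro i _
      exact fun h => hj ⟨i, h⟩
    have : (∫ y : ℝ, g y * f y ^ (1 + m d j)) = 0 := by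
      rw [hmj]
      simpa using hmean
    rw [ht]
    exact mul_eq_zero_of_right _ (Finset.prod_eq_zero (Finset.mem_univ j) this)
  have hone : ∀ σ : Equiv.Perm (Fin n), t ⇑σ = ∏ i, A i (σ i) := by
    intro σ
    have hmj : ∀ j, m (⇑σ) j = 1 := by
      intro j
      rw [hm]
      simp only
      have : (Finset.univ.filter fun i => σ i = j) = {σ⁻¹ j} := by
        ext i
        simp [Equiv.Perm.eq_inv_iff_eq, eq_comm]
        rw [Equiv.eq_symm_apply]; exact eq_comm
      rw [this, Finset.card_singleton]
    rw [ht]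
    simp only [hmj]
    have : (∫ y : ℝ, g y * f y ^ (1 + 1)) = 1 := hvar
    simp [this]
  -- reduce the sum over all functions to the sum over permutations
  have hsum : (∑ d : Fin n → Fin n, t d) = ∑ σ : Equiv.Perm (Fin n), t ⇑σ := by
    rw [← Finset.sum_filter_of_ne (p := fun d => Function.Bijective d)
      (fun d _ hd => by by_contra h; exact hd (hzero d h))]
    refine Finset.sum_bij' (fun d hd => Equiv.ofBijective d (Finset.mem_filter.mp hd).2)
      (fun σ _ => ⇑σ) ?_ ?_ ?_ ?_ ?_
    · intro d hd; exact Finset.mem_univ _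
    · intro σ _
      exact Finset.mem_filter.mpr ⟨Finset.mem_univ _, σ.bijective⟩
    · intro d hd; rfl
    · intro σ _; ext i; rfl
    · intro d hd; rfl
  calc A.permanent = ∑ σ : Equiv.Perm (Fin n), ∏ i, A i (σ i) := by
        rw [← Matrix.permanent_transpose, Matrix.permanent]
        rfl
    _ = ∑ d : Fin n → Fin n, t d := by
        rw [hsum]; exact Finset.sum_congr rfl fun σ _ => (hone σ).symm
    _ = _ := rfl
end
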